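/- Let N ≥ 7 be an integer and define ι₃(t) = γ₃'(t)·(2·γ₃(t)·(γ₃(t) − 2·τ(t)²) + τ(t)²·(γ₃(t) + 2·γ₄(t))) − 2·τ'(t)·τ(t)·γ₃(t)·(γ₃(t) + 2·γ₄(t)) + 4·γ₄'(t)·γ₃(t)·(γ₃(t) − 2·τ(t)²) for t ∈ (0,1), where primes denote derivatives. Then ι₃(t) → −∞ as t → 0⁺ and ι₃(t₁*) > 0, where t₁* ∈ (0,1/2) is the unique zero of γ₃ in (0,1). Consequently there exists t₁ ∈ (0, t₁*) with ι₃(t₁) = 0. -/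

import Mathlib

open Real Filter Set Topology

/-- `τ(t) = t^{-(N-2)} − 1`. -/
noncomputable def tau (N : ℕ) (t : ℝ) : ℝ := t ^ (-((N : ℝ) - 2)) - 1

/-- `γ₃(t) = (1−t²)^{-(N−2)} − (2t)^{-(N−2)} + (t²+1)^{-(N−2)}`. -/
noncomputable def gamma3 (N : ℕ) (t : ℝ) : ℝ :=
  (1 - t ^ 2) ^ (-((N : ℝ) - 2)) - (2 * t) ^ (-((N : ℝ) - 2)) +
    (t ^ 2 + 1) ^ (-((N : ℝ) - 2))

/-- `γ₄(t) = (√2·t)^{-(N−2)} − (t⁴+1)^{-(N−2)/2}`. -/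
noncomputable def gamma4 (N : ℕ) (t : ℝ) : ℝ :=
  (Real.sqrt 2 * t) ^ (-((N : ℝ) - 2)) - (t ^ 4 + 1) ^ (-((N : ℝ) - 2) / 2)

/-- `ι₃(t) = γ₃'(t)·(2γ₃(t)(γ₃(t) − 2τ(t)²) + τ(t)²(γ₃(t) + 2γ₄(t)))
      − 2τ'(t)τ(t)γ₃(t)(γ₃(t) + 2γ₄(t)) + 4γ₄'(t)γ₃(t)(γ₃(t) − 2τ(t)²)`. -/
noncomputable def iota3 (N : ℕ) (t : ℝ) : ℝ :=
  deriv (gamma3 N) t *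
      (2 * gamma3 N t * (gamma3 N t - 2 * (tau N t) ^ 2) +
        (tau N t) ^ 2 * (gamma3 N t + 2 * gamma4 N t)) -
    2 * deriv (tau N) t * tau N t * gamma3 N t * (gamma3 N t + 2 * gamma4 N t) +
    4 * deriv (gamma4 N) t * gamma3 N t * (gamma3 N t - 2 * (tau N t) ^ 2)

noncomputable def tauD (N : ℕ) (t : ℝ) : ℝ := (-((N:ℝ)-2)) * t ^ (-((N:ℝ)-2) - 1)
noncomputable def g3D (N : ℕ) (t : ℝ) : ℝ :=
  2*((N:ℝ)-2)*t*(1-t^2) ^ (-((N:ℝ)-2)-1) + 2*((N:ℝ)-2)*(2*t) ^ (-((N:ℝ)-2)-1)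
    - 2*((N:ℝ)-2)*t*(t^2+1) ^ (-((N:ℝ)-2)-1)
noncomputable def g4D (N : ℕ) (t : ℝ) : ℝ :=
  -(Real.sqrt 2*((N:ℝ)-2)*(Real.sqrt 2*t) ^ (-((N:ℝ)-2) - 1))
    + 2*((N:ℝ)-2)*t^3*(t^4+1) ^ (-((N:ℝ)-2)/2 - 1)

lemma tau_hasDeriv (N : ℕ) {t : ℝ} (ht : 0 < t) : HasDerivAt (tau N) (tauD N t) t := by
  unfold tau tauD
  exact (Real.hasDerivAt_rpow_const (Or.inl ht.ne')).sub_const 1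

lemma gamma3_hasDeriv (N : ℕ) {t : ℝ} (ht : 0 < t) (ht1 : t < 1) :
    HasDerivAt (gamma3 N) (g3D N t) t := by
  have h1 : (1 : ℝ) - t^2 ≠ 0 := by nlinarith
  have h2 : (2*t : ℝ) ≠ 0 := by positivity
  have h3 : (t^2+1 : ℝ) ≠ 0 := by positivity
  have d1 : HasDerivAt (fun t : ℝ => 1 - t^2) (-(2*t)) t := by
    simpa using ((hasDerivAt_pow 2 t).const_sub 1)
  have d2 : HasDerivAt (fun t : ℝ => 2*t) 2 t := by
    simpa using (hasDerivAt_id t).const_mul 2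
  have d3 : HasDerivAt (fun t : ℝ => t^2+1) (2*t) t := by
    simpa using (hasDerivAt_pow 2 t).add_const 1
  have key := ((d1.rpow_const (p := -((N:ℝ)-2)) (Or.inl h1)).sub (d2.rpow_const (p := -((N:ℝ)-2)) (Or.inl h2))).add
    (d3.rpow_const (p := -((N:ℝ)-2)) (Or.inl h3))
  unfold gamma3 g3D
  exact key.congr_deriv (by ring)

lemma gamma4_hasDeriv (N : ℕ) {t : ℝ} (ht : 0 < t) :
    HasDerivAt (gamma4 N) (g4D N t) t := by
  have h2 : (Real.sqrt 2 * t : ℝ) ≠ 0 := by positivity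
  have h4 : (t^4+1 : ℝ) ≠ 0 := by positivity
  have d2 : HasDerivAt (fun t : ℝ => Real.sqrt 2 * t) (Real.sqrt 2) t := by
    simpa using (hasDerivAt_id t).const_mul (Real.sqrt 2)
  have d4 : HasDerivAt (fun t : ℝ => t^4+1) (4*t^3) t := by
    simpa using (hasDerivAt_pow 4 t).add_const 1
  have key := (d2.rpow_const (p := -((N:ℝ)-2)) (Or.inl h2)).sub (d4.rpow_const (p := -((N:ℝ)-2)/2) (Or.inl h4))
  unfold gamma4 g4D
  exact key.congr_deriv (by ring)

lemma deriv_tau_eq (N : ℕ) {t : ℝ} (ht : 0 < t) : deriv (tau N) t = tauD N t :=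
  (tau_hasDeriv N ht).deriv
lemma deriv_gamma3_eq (N : ℕ) {t : ℝ} (ht : 0 < t) (ht1 : t < 1) :
    deriv (gamma3 N) t = g3D N t := (gamma3_hasDeriv N ht ht1).deriv
lemma deriv_gamma4_eq (N : ℕ) {t : ℝ} (ht : 0 < t) : deriv (gamma4 N) t = g4D N t :=
  (gamma4_hasDeriv N ht).deriv

noncomputable def iotaE (N : ℕ) (t : ℝ) : ℝ :=
  g3D N t *
      (2 * gamma3 N t * (gamma3 N t - 2 * (tau N t) ^ 2) +
        (tau N t) ^ 2 * (gamma3 N t + 2 * gamma4 N t)) -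
    2 * tauD N t * tau N t * gamma3 N t * (gamma3 N t + 2 * gamma4 N t) +
    4 * g4D N t * gamma3 N t * (gamma3 N t - 2 * (tau N t) ^ 2)

noncomputable def Xf (N : ℕ) (t : ℝ) : ℝ := t ^ ((N:ℝ)-2)
noncomputable def Tf (N : ℕ) (t : ℝ) : ℝ := 1 - t ^ ((N:ℝ)-2)
noncomputable def B3f (N : ℕ) (t : ℝ) : ℝ :=
  t ^ ((N:ℝ)-2) * (1-t^2) ^ (-((N:ℝ)-2)) - 2 ^ (-((N:ℝ)-2))
    + t ^ ((N:ℝ)-2) * (t^2+1) ^ (-((N:ℝ)-2))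
noncomputable def B4f (N : ℕ) (t : ℝ) : ℝ :=
  (Real.sqrt 2) ^ (-((N:ℝ)-2)) - t ^ ((N:ℝ)-2) * (t^4+1) ^ (-((N:ℝ)-2)/2)
noncomputable def D3f (N : ℕ) (t : ℝ) : ℝ :=
  2*((N:ℝ)-2)*t^2*t ^ ((N:ℝ)-2)*(1-t^2) ^ (-((N:ℝ)-2)-1) + ((N:ℝ)-2)*2 ^ (-((N:ℝ)-2))
    - 2*((N:ℝ)-2)*t^2*t ^ ((N:ℝ)-2)*(t^2+1) ^ (-((N:ℝ)-2)-1)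
noncomputable def D4f (N : ℕ) (t : ℝ) : ℝ :=
  -(((N:ℝ)-2)*(Real.sqrt 2) ^ (-((N:ℝ)-2)))
    + 2*((N:ℝ)-2)*t^4*t ^ ((N:ℝ)-2)*(t^4+1) ^ (-((N:ℝ)-2)/2-1)

noncomputable def Gfun (N : ℕ) (t : ℝ) : ℝ :=
  D3f N t * (2*B3f N t*(Xf N t*B3f N t - 2*(Tf N t)^2) + (Tf N t)^2*(B3f N t + 2*B4f N t))
    + 2*((N:ℝ)-2)*Tf N t*B3f N t*(B3f N t + 2*B4f N t)
    + 4*D4f N t*B3f N t*(Xf N t*B3f N t - 2*(Tf N t)^2)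

lemma key_identity (N : ℕ) {t : ℝ} (ht : 0 < t) (ht1 : t < 1) :
    iotaE N t = ((t ^ ((N:ℝ)-2))^4 * t)⁻¹ * Gfun N t := by
  have hs : (0:ℝ) < t ^ ((N:ℝ)-2) := Real.rpow_pos_of_pos ht _
  have hsne : t ^ ((N:ℝ)-2) ≠ 0 := hs.ne'
  have hsqrt2 : (0:ℝ) < Real.sqrt 2 := Real.sqrt_pos.mpr (by norm_num)
  have hA : t ^ (-((N:ℝ)-2)) = (t ^ ((N:ℝ)-2))⁻¹ := Real.rpow_neg ht.le _
  have hB : t ^ (-((N:ℝ)-2) - 1) = (t ^ ((N:ℝ)-2))⁻¹ * t⁻¹ := by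
    rw [show -((N:ℝ)-2) - 1 = (-((N:ℝ)-2)) + (-1) by ring, Real.rpow_add ht,
      Real.rpow_neg ht.le, Real.rpow_neg_one]
  have hC : (2*t) ^ (-((N:ℝ)-2)) = 2 ^ (-((N:ℝ)-2)) * (t ^ ((N:ℝ)-2))⁻¹ := by
    rw [Real.mul_rpow (by norm_num) ht.le, hA]
  have hD : (2*t) ^ (-((N:ℝ)-2) - 1)
      = 2 ^ (-((N:ℝ)-2)) * 2⁻¹ * ((t ^ ((N:ℝ)-2))⁻¹ * t⁻¹) := by
    rw [Real.mul_rpow (by norm_num) ht.le, hB,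
      show -((N:ℝ)-2) - 1 = (-((N:ℝ)-2)) + (-1) by ring, Real.rpow_add (by norm_num : (0:ℝ) < 2),
      Real.rpow_neg_one]
  have hE : (Real.sqrt 2 * t) ^ (-((N:ℝ)-2))
      = (Real.sqrt 2) ^ (-((N:ℝ)-2)) * (t ^ ((N:ℝ)-2))⁻¹ := by
    rw [Real.mul_rpow hsqrt2.le ht.le, hA]
  have hF : (Real.sqrt 2 * t) ^ (-((N:ℝ)-2) - 1)
      = (Real.sqrt 2) ^ (-((N:ℝ)-2)) * (Real.sqrt 2)⁻¹ * ((t ^ ((N:ℝ)-2))⁻¹ * t⁻¹) := by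
    rw [Real.mul_rpow hsqrt2.le ht.le, hB,
      show -((N:ℝ)-2) - 1 = (-((N:ℝ)-2)) + (-1) by ring, Real.rpow_add hsqrt2,
      Real.rpow_neg_one]
  simp only [iotaE, Gfun, tauD, g3D, g4D, gamma3, gamma4, tau, Xf, Tf, B3f, B4f, D3f, D4f,
    hA, hB, hC, hD, hE, hF]
  field_simp
  ring

lemma iota3_eq_iotaE (N : ℕ) {t : ℝ} (ht : 0 < t) (ht1 : t < 1) : iota3 N t = iotaE N t := by
  unfold iota3 iotaE
  rw [deriv_tau_eq N ht, deriv_gamma3_eq N ht ht1, deriv_gamma4_eq N ht]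

lemma Gfun_contAt (N : ℕ) (hN : 7 ≤ N) : ContinuousAt (Gfun N) 0 := by
  have hm : (0:ℝ) ≤ (N:ℝ) - 2 := by
    have : (7:ℝ) ≤ (N:ℝ) := by exact_mod_cast hN
    linarith
  have cX : ContinuousAt (fun t : ℝ => t ^ ((N:ℝ)-2)) 0 :=
    Real.continuousAt_rpow_const 0 _ (Or.inr hm)
  have c1 : ContinuousAt (fun t : ℝ => (1-t^2) ^ (-((N:ℝ)-2))) 0 := by
    apply ContinuousAt.rpow_const (by fun_prop)
    left; norm_num
  have c2 : ContinuousAt (fun t : ℝ => (t^2+1) ^ (-((N:ℝ)-2))) 0 := by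
    apply ContinuousAt.rpow_const (by fun_prop)
    left; norm_num
  have c3 : ContinuousAt (fun t : ℝ => (t^4+1) ^ (-((N:ℝ)-2)/2)) 0 := by
    apply ContinuousAt.rpow_const (by fun_prop)
    left; norm_num
  have c1' : ContinuousAt (fun t : ℝ => (1-t^2) ^ (-((N:ℝ)-2)-1)) 0 := by
    apply ContinuousAt.rpow_const (by fun_prop)
    left; norm_num
  have c2' : ContinuousAt (fun t : ℝ => (t^2+1) ^ (-((N:ℝ)-2)-1)) 0 := by
    apply ContinuousAt.rpow_const (by fun_prop)
    left; norm_num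
  have c3' : ContinuousAt (fun t : ℝ => (t^4+1) ^ (-((N:ℝ)-2)/2-1)) 0 := by
    apply ContinuousAt.rpow_const (by fun_prop)
    left; norm_num
  unfold Gfun Xf Tf B3f B4f D3f D4f
  fun_prop

lemma Gfun_zero_neg (N : ℕ) (hN : 7 ≤ N) : Gfun N 0 < 0 := by
  have hm5 : (5:ℝ) ≤ (N:ℝ) - 2 := by
    have : (7:ℝ) ≤ (N:ℝ) := by exact_mod_cast hN
    linarith
  have hm0 : (0:ℝ) < (N:ℝ) - 2 := by linarith
  have hsqrt2 : (0:ℝ) < Real.sqrt 2 := Real.sqrt_pos.mpr (by norm_num)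
  have hsqrt2lt : Real.sqrt 2 < 2 := by
    nlinarith [Real.sq_sqrt (by norm_num : (0:ℝ) ≤ 2), Real.sqrt_nonneg 2]
  set m : ℝ := (N:ℝ) - 2 with hm
  set a : ℝ := (2:ℝ) ^ (-m) with ha
  set b : ℝ := (Real.sqrt 2) ^ (-m) with hb
  have hapos : 0 < a := Real.rpow_pos_of_pos (by norm_num) _
  have hbpos : 0 < b := Real.rpow_pos_of_pos hsqrt2 _
  have hab : a < b := Real.rpow_lt_rpow_of_neg hsqrt2 hsqrt2lt (by linarith)
  have h0 : Gfun N 0 = m*a*(2*(-a)*(0*(-a) - 2*1^2) + 1^2*(-a + 2*b))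
      + 2*m*1*(-a)*(-a + 2*b) + 4*(-(m*b))*(-a)*(0*(-a) - 2*1^2) := by
    simp [Gfun, Xf, Tf, B3f, B4f, D3f, D4f, Real.zero_rpow hm0.ne', Real.one_rpow, ← hm,
      ← ha, ← hb]
  rw [h0]
  nlinarith [mul_pos (mul_pos hm0 hapos) (sub_pos.mpr hab), mul_pos hm0 hapos,
    mul_pos hapos hbpos]

lemma tendsto_iota3_atBot (N : ℕ) (hN : 7 ≤ N) : Tendsto (iota3 N) (𝓝[>] (0:ℝ)) atBot := by
  have hm : (0:ℝ) < (N:ℝ) - 2 := by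
    have : (7:ℝ) ≤ (N:ℝ) := by exact_mod_cast hN
    linarith
  have cX : ContinuousAt (fun t : ℝ => t ^ ((N:ℝ)-2)) 0 :=
    Real.continuousAt_rpow_const 0 _ (Or.inr hm.le)
  have hfac : Tendsto (fun t : ℝ => (t ^ ((N:ℝ)-2))^4 * t) (𝓝[>] (0:ℝ)) (𝓝[>] (0:ℝ)) := by
    apply tendsto_nhdsWithin_of_tendsto_nhds_of_eventually_within
    · have hc : ContinuousAt (fun t : ℝ => (t ^ ((N:ℝ)-2))^4 * t) 0 :=
        (cX.pow 4).mul continuousAt_id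
      have := hc.tendsto
      simpa [Real.zero_rpow hm.ne'] using this.mono_left nhdsWithin_le_nhds
    · filter_upwards [self_mem_nhdsWithin] with t ht
      have h1 : (0:ℝ) < t := ht
      have h2 : (0:ℝ) < t ^ ((N:ℝ)-2) := Real.rpow_pos_of_pos h1 _
      exact Set.mem_Ioi.mpr (by positivity)
  have hinv : Tendsto (fun t : ℝ => ((t ^ ((N:ℝ)-2))^4 * t)⁻¹) (𝓝[>] (0:ℝ)) atTop :=
    hfac.inv_tendsto_nhdsGT_zero
  have hGt : Tendsto (Gfun N) (𝓝[>] (0:ℝ)) (𝓝 (Gfun N 0)) :=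
    ((Gfun_contAt N hN).continuousWithinAt).tendsto
  have hmain := hinv.atTop_mul_neg (Gfun_zero_neg N hN) hGt
  apply hmain.congr'
  filter_upwards [Ioo_mem_nhdsGT_of_mem (by norm_num : (0:ℝ) ∈ Ico (0:ℝ) 1)] with t ht
  rw [iota3_eq_iotaE N ht.1 ht.2, key_identity N ht.1 ht.2]

lemma iota3_pos_at_zero (N : ℕ) (hN : 7 ≤ N) {t : ℝ} (ht : 0 < t) (ht2 : t < 1/2)
    (h0 : gamma3 N t = 0) : 0 < iota3 N t := by
  have hm : (0:ℝ) < (N:ℝ)-2 := by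
    have : (7:ℝ) ≤ (N:ℝ) := by exact_mod_cast hN
    linarith
  have ht1 : t < 1 := by linarith
  have hsqrt2 : (0:ℝ) < Real.sqrt 2 := Real.sqrt_pos.mpr (by norm_num)
  have hsqrt2lt : Real.sqrt 2 < 2 := by
    nlinarith [Real.sq_sqrt (by norm_num : (0:ℝ) ≤ 2), Real.sqrt_nonneg 2]
  have hval : iota3 N t = g3D N t * ((tau N t)^2 * (2 * gamma4 N t)) := by
    unfold iota3
    rw [deriv_gamma3_eq N ht ht1, h0]
    ring
  rw [hval]
  have htau : 0 < tau N t := by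
    unfold tau
    have : 1 < t ^ (-((N:ℝ)-2)) :=
      (Real.one_lt_rpow_iff_of_pos ht).mpr (Or.inr ⟨ht1, by linarith⟩)
    linarith
  have hg4 : 0 < gamma4 N t := by
    unfold gamma4
    have hlt : Real.sqrt 2 * t < 1 := by nlinarith
    have h1 : 1 < (Real.sqrt 2 * t) ^ (-((N:ℝ)-2)) :=
      Real.one_lt_rpow_of_pos_of_lt_one_of_neg (by positivity) hlt (by linarith)
    have h2 : (t^4+1 : ℝ) ^ (-((N:ℝ)-2)/2) < 1 :=
      Real.rpow_lt_one_of_one_lt_of_neg (by nlinarith [pow_pos ht 4]) (by linarith)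
    linarith
  have hg3d : 0 < g3D N t := by
    unfold g3D
    have e1 : (t^2+1 : ℝ) ^ (-((N:ℝ)-2)-1) < (1-t^2) ^ (-((N:ℝ)-2)-1) :=
      Real.rpow_lt_rpow_of_neg (by nlinarith) (by nlinarith) (by linarith)
    have e2 : (0:ℝ) < (2*t : ℝ) ^ (-((N:ℝ)-2)-1) := Real.rpow_pos_of_pos (by linarith) _
    nlinarith [mul_pos (mul_pos hm ht) (sub_pos.mpr e1), mul_pos hm e2]
  exact mul_pos hg3d (mul_pos (pow_pos htau 2) (by linarith))

set_option maxHeartbeats 1600000 in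
lemma iotaE_contAt (N : ℕ) {t : ℝ} (ht : 0 < t) (ht1 : t < 1) : ContinuousAt (iotaE N) t := by
  have h1 : (1:ℝ) - t^2 ≠ 0 := by nlinarith
  have h2 : (2*t : ℝ) ≠ 0 := by positivity
  have h3 : (t^2+1 : ℝ) ≠ 0 := by positivity
  have h4 : (t^4+1 : ℝ) ≠ 0 := by positivity
  have hsqrt2 : (0:ℝ) < Real.sqrt 2 := Real.sqrt_pos.mpr (by norm_num)
  have h5 : (Real.sqrt 2 * t : ℝ) ≠ 0 := by positivity
  have cA : ContinuousAt (fun t : ℝ => t ^ (-((N:ℝ)-2))) t :=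
    ContinuousAt.rpow_const (by fun_prop) (Or.inl ht.ne')
  have cB : ContinuousAt (fun t : ℝ => t ^ (-((N:ℝ)-2)-1)) t :=
    ContinuousAt.rpow_const (by fun_prop) (Or.inl ht.ne')
  have c1 : ContinuousAt (fun t : ℝ => (1-t^2) ^ (-((N:ℝ)-2))) t :=
    ContinuousAt.rpow_const (by fun_prop) (Or.inl h1)
  have c1' : ContinuousAt (fun t : ℝ => (1-t^2) ^ (-((N:ℝ)-2)-1)) t :=
    ContinuousAt.rpow_const (by fun_prop) (Or.inl h1)
  have c2 : ContinuousAt (fun t : ℝ => (2*t) ^ (-((N:ℝ)-2))) t :=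
    ContinuousAt.rpow_const (by fun_prop) (Or.inl h2)
  have c2' : ContinuousAt (fun t : ℝ => (2*t) ^ (-((N:ℝ)-2)-1)) t :=
    ContinuousAt.rpow_const (by fun_prop) (Or.inl h2)
  have c3 : ContinuousAt (fun t : ℝ => (t^2+1) ^ (-((N:ℝ)-2))) t :=
    ContinuousAt.rpow_const (by fun_prop) (Or.inl h3)
  have c3' : ContinuousAt (fun t : ℝ => (t^2+1) ^ (-((N:ℝ)-2)-1)) t :=
    ContinuousAt.rpow_const (by fun_prop) (Or.inl h3)
  have c4 : ContinuousAt (fun t : ℝ => (t^4+1) ^ (-((N:ℝ)-2)/2)) t :=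
    ContinuousAt.rpow_const (by fun_prop) (Or.inl h4)
  have c4' : ContinuousAt (fun t : ℝ => (t^4+1) ^ (-((N:ℝ)-2)/2-1)) t :=
    ContinuousAt.rpow_const (by fun_prop) (Or.inl h4)
  have c5 : ContinuousAt (fun t : ℝ => (Real.sqrt 2 * t) ^ (-((N:ℝ)-2))) t :=
    ContinuousAt.rpow_const (by fun_prop) (Or.inl h5)
  have c5' : ContinuousAt (fun t : ℝ => (Real.sqrt 2 * t) ^ (-((N:ℝ)-2)-1)) t :=
    ContinuousAt.rpow_const (by fun_prop) (Or.inl h5)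
  unfold iotaE g3D tauD g4D gamma3 gamma4 tau
  clear h1 h2 h3 h4 h5 hsqrt2 ht ht1
  fun_prop

theorem stmt_19 (N : ℕ) (hN : 7 ≤ N) :
    Tendsto (iota3 N) (nhdsWithin 0 (Ioi 0)) atBot ∧
    ∀ tstar : ℝ, tstar ∈ Ioo (0 : ℝ) (1 / 2) → gamma3 N tstar = 0 →
      0 < iota3 N tstar ∧ ∃ t1 ∈ Ioo (0 : ℝ) tstar, iota3 N t1 = 0 := by
  refine ⟨tendsto_iota3_atBot N hN, ?_⟩
  intro tstar hts h0
  obtain ⟨hts0, hts2⟩ := hts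
  have hpos := iota3_pos_at_zero N hN hts0 hts2 h0
  refine ⟨hpos, ?_⟩
  have hev : ∀ᶠ t in 𝓝[>] (0:ℝ), iota3 N t < 0 :=
    (tendsto_iota3_atBot N hN).eventually (eventually_lt_atBot 0)
  have hev2 : Ioo (0:ℝ) tstar ∈ 𝓝[>] (0:ℝ) :=
    Ioo_mem_nhdsGT_of_mem ⟨le_refl 0, hts0⟩
  obtain ⟨t0, hneg, ht00, ht0s⟩ := (hev.and hev2).exists
  have hcont : ContinuousOn (iota3 N) (Icc t0 tstar) := by
    intro x hx
    have hx0 : 0 < x := lt_of_lt_of_le ht00 hx.1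
    have hx1 : x < 1 := by
      have := hx.2
      linarith
    have heq : iotaE N =ᶠ[𝓝 x] iota3 N := by
      filter_upwards [Ioo_mem_nhds hx0 hx1] with y hy
      exact (iota3_eq_iotaE N hy.1 hy.2).symm
    exact ((iotaE_contAt N hx0 hx1).congr heq).continuousWithinAt
  have himg := intermediate_value_Ioo ht0s.le hcont
  have h0mem : (0:ℝ) ∈ Ioo (iota3 N t0) (iota3 N tstar) := ⟨hneg, hpos⟩
  obtain ⟨t1, ht1m, ht1e⟩ := himg h0mem
  exact ⟨t1, ⟨lt_trans ht00 ht1m.1, ht1m.2⟩, ht1e⟩
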